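/- If Ψ is a maximal closed subroot system of Φ, the affine root system of type D_{n+1}^{(2)}, such that Gr(Ψ) is not closed in Gr(Φ) (i.e., there exist u, v ∈ Gr(Ψ) with u + v ∈ Gr(Φ) ∖ Gr(Ψ)), then Ψ = Ψ_I for some proper subset I ⊊ {1, …, n}. -/

import Mathlib

noncomputable section

variable {V : Type*} [NormedAddCommGroup V] [InnerProductSpace ℝ V]

/-- The Cartan pairing `⟨β, α∨⟩ = 2(β,α)/(α,α)`. -/
def cartanPair (α β : V) : ℝ := 2 * (inner ℝ β α : ℝ) / (inner ℝ α α : ℝ)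

/-- The reflection `s_α` on `V`: `s_α(β) = β - ⟨β,α∨⟩ α`. -/
def reflV (α β : V) : V := β - cartanPair α β • α

/-- The affine reflection `s_x` on `V × ℝ` with respect to the bilinear form
`B((x,a),(y,b)) = (x,y)`. -/
def reflA (x y : V × ℝ) : V × ℝ :=
  y - (2 * (inner ℝ y.1 x.1 : ℝ) / (inner ℝ x.1 x.1 : ℝ)) • x

/-- A finite irreducible reduced crystallographic root system in `V`. -/
structure IsIrreducibleRootSystem (R : Set V) : Prop where
  finite : R.Finite
  spans : Submodule.span ℝ R = ⊤
  zero_notMem : (0 : V) ∉ R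
  reduced : ∀ α ∈ R, ∀ c : ℝ, c • α ∈ R → c = 1 ∨ c = -1
  cartan_int : ∀ α ∈ R, ∀ β ∈ R, ∃ n : ℤ, cartanPair α β = (n : ℝ)
  refl_mem : ∀ α ∈ R, ∀ β ∈ R, reflV α β ∈ R
  irred : ∀ A B : Set V, R = A ∪ B → A.Nonempty → B.Nonempty →
    ∃ a ∈ A, ∃ b ∈ B, (inner ℝ a b : ℝ) ≠ 0

/-- A subroot system of a set `Φ` of affine roots: a nonempty proper subset stable
under the reflections `s_x`, `x ∈ Ψ`. -/
def IsSubrootSystem (Φ Ψ : Set (V × ℝ)) : Prop :=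
  Ψ.Nonempty ∧ Ψ ⊆ Φ ∧ Ψ ≠ Φ ∧ ∀ x ∈ Ψ, ∀ y ∈ Ψ, reflA x y ∈ Ψ

/-- `Ψ` is closed in `Φ`. -/
def IsClosedIn (Φ Ψ : Set (V × ℝ)) : Prop := ∀ x ∈ Ψ, ∀ y ∈ Ψ, x + y ∈ Φ → x + y ∈ Ψ

def IsClosedSubrootSystem (Φ Ψ : Set (V × ℝ)) : Prop :=
  IsSubrootSystem Φ Ψ ∧ IsClosedIn Φ Ψ

/-- A maximal closed subroot system of `Φ`: any closed subroot system of `Φ`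
containing it equals it. -/
def IsMaximalClosedSubrootSystem (Φ Ψ : Set (V × ℝ)) : Prop :=
  IsClosedSubrootSystem Φ Ψ ∧ ∀ Δ, IsClosedSubrootSystem Φ Δ → Ψ ⊆ Δ → Δ = Ψ

/-- A subroot system of a finite root system `R`. -/
def IsSubrootSystemF (R S : Set V) : Prop :=
  S.Nonempty ∧ S ⊆ R ∧ S ≠ R ∧ ∀ α ∈ S, ∀ β ∈ S, reflV α β ∈ S

/-- `S` is closed in the finite root system `R`. -/
def IsClosedInF (R S : Set V) : Prop := ∀ α ∈ S, ∀ β ∈ S, α + β ∈ R → α + β ∈ S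

def IsMaximalClosedSubrootSystemF (R S : Set V) : Prop :=
  (IsSubrootSystemF R S ∧ IsClosedInF R S) ∧
    ∀ T, IsSubrootSystemF R T → IsClosedInF R T → S ⊆ T → T = S

/-- A `ℤ`-linear function on `S`: the restriction to `S` of an additive group
homomorphism from the subgroup of `V` generated by `S` to `ℤ`. -/
def IsZLinearOn (S : Set V) (p : V → ℤ) : Prop :=
  ∃ f : AddSubgroup.closure S →+ ℤ,
    ∀ α, ∀ h : α ∈ S, p α = f ⟨α, AddSubgroup.subset_closure h⟩

/-- An irreducible subset: nonempty and not a union of two nonempty mutually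
orthogonal subsets. -/
def IsIrreducibleSubset (S : Set V) : Prop :=
  S.Nonempty ∧ ∀ A B : Set V, S = A ∪ B → A.Nonempty → B.Nonempty →
    ∃ a ∈ A, ∃ b ∈ B, (inner ℝ a b : ℝ) ≠ 0

/-- Euclidean space `ℝ^n`. -/
abbrev Euc (n : ℕ) := EuclideanSpace ℝ (Fin n)

/-- The standard basis vector `ε_i`. -/
def eps {n : ℕ} (i : Fin n) : Euc n := EuclideanSpace.single i 1

/-- `σ` is a sign. -/
def PM (σ : ℝ) : Prop := σ = 1 ∨ σ = -1

/-- The gradient of a set of affine roots (concrete case): vectors appearing as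
the `ℝ^n`-component. -/
def GrC {n : ℕ} (Ψ : Set (Euc n × ℝ)) : Set (Euc n) := {v | ∃ c : ℝ, (v, c) ∈ Ψ}

/-- The affine root system of type `D_{n+1}^{(2)}`. -/
def PhiD2 (n : ℕ) : Set (Euc n × ℝ) :=
  {x | (∃ i : Fin n, ∃ σ : ℝ, PM σ ∧ ∃ r : ℤ, x = (σ • eps i, (r : ℝ))) ∨
       (∃ i j : Fin n, i ≠ j ∧ ∃ σ τ : ℝ, PM σ ∧ PM τ ∧ ∃ r : ℤ,
          x = (σ • eps i + τ • eps j, ((2 * r : ℤ) : ℝ)))}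

/-- The subset `Ψ_I` of `D_{n+1}^{(2)}` attached to `I ⊆ {1,…,n}`. -/
def PsiID2 (n : ℕ) (I : Set (Fin n)) : Set (Euc n × ℝ) :=
  {x | (∃ s ∈ I, ∃ σ : ℝ, PM σ ∧ ∃ r : ℤ, x = (σ • eps s, ((2 * r : ℤ) : ℝ))) ∨
       (∃ s : Fin n, s ∉ I ∧ ∃ σ : ℝ, PM σ ∧ ∃ r : ℤ,
          x = (σ • eps s, ((2 * r + 1 : ℤ) : ℝ))) ∨
       (∃ s t : Fin n, s ≠ t ∧ ((s ∈ I ∧ t ∈ I) ∨ (s ∉ I ∧ t ∉ I)) ∧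
          ∃ σ τ : ℝ, PM σ ∧ PM τ ∧ ∃ r : ℤ,
            x = (σ • eps s + τ • eps t, ((2 * r : ℤ) : ℝ)))}

/-!
In coordinates, `Φ` is the set of `v + cδ` with `v ∈ ℤⁿ`, `‖v‖² ∈ {1, 2}` and `c ∈ ‖v‖² ℤ`, so
reflections preserve it and all Cartan integers are integers. Then `Ψ_I` is the set of roots on
which the additive functional `v + cδ ↦ c - ∑_{k ∉ I} v_k` takes even values, which makes it a
closed subroot system for every `I`.

Conversely, let `u, v ∈ Gr(Ψ)` with `u + v ∈ Gr(Φ) \ Gr(Ψ)`. Since norms are `1` or `2` and inner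
products are integers, either a reflection `s_u` or `s_v` would put `u + v` into `Gr(Ψ)`, or `u`
and `v` are orthogonal short roots; after sign changes by reflections, `ε_i, ε_j ∈ Gr(Ψ)` but
`ε_i + ε_j ∉ Gr(Ψ)`. By closedness, `ε_i` and `ε_j` then occur in `Ψ` only at levels of opposite
parity, and this forces each `ε_s` to occur only at levels of one parity. With `I` the set of `s`
for which that parity is even, `Ψ ⊆ Ψ_I` and `I` misses `i` or `j`; maximality gives `Ψ = Ψ_I`.
-/

open scoped RealInnerProductSpace

section General

theorem reflA_eq_sub_smul (x y : V × ℝ) : reflA x y = y - cartanPair x.1 y.1 • x := rfl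

theorem reflA_self {x : V × ℝ} (hx : x.1 ≠ 0) : reflA x x = -x := by
  rw [reflA_eq_sub_smul, cartanPair, mul_div_assoc, div_self (inner_self_ne_zero.2 hx)]
  module

theorem reflA_eq_add {x y : V × ℝ} (hx : x.1 ≠ 0) (h : 2 * ⟪y.1, x.1⟫ = -⟪x.1, x.1⟫) :
    reflA x y = y + x := by
  rw [reflA_eq_sub_smul, cartanPair, h, neg_div, div_self (inner_self_ne_zero.2 hx)]
  module

variable {A : Type*} [AddGroup A]

theorem isClosedIn_setOf_map_mem {W : Type*} [NormedAddCommGroup W] (Φ : Set (W × ℝ))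
    (f : W × ℝ →+ A) (H : AddSubgroup A) : IsClosedIn Φ {x | x ∈ Φ ∧ f x ∈ H} :=
  fun _ hx _ hy hxy => ⟨hxy, by rw [map_add]; exact H.add_mem hx.2 hy.2⟩

theorem reflA_mem_setOf_map_mem {Φ : Set (V × ℝ)} (hΦ : ∀ x ∈ Φ, ∀ y ∈ Φ, reflA x y ∈ Φ)
    (hΦℤ : ∀ x ∈ Φ, ∀ y ∈ Φ, ∃ m : ℤ, cartanPair x.1 y.1 = m) (f : V × ℝ →+ A)
    (H : AddSubgroup A) {x y : V × ℝ} (hx : x ∈ Φ ∧ f x ∈ H) (hy : y ∈ Φ ∧ f y ∈ H) :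
    reflA x y ∈ Φ ∧ f (reflA x y) ∈ H := by
  obtain ⟨m, hm⟩ := hΦℤ x hx.1 y hy.1
  refine ⟨hΦ x hx.1 y hy.1, ?_⟩
  rw [reflA_eq_sub_smul, hm, Int.cast_smul_eq_zsmul, map_sub, map_zsmul]
  exact H.sub_mem hy.2 (H.zsmul_mem hx.2 m)

end General

section Signs

theorem PM.one : PM 1 := Or.inl rfl

theorem PM.neg {σ : ℝ} (hσ : PM σ) : PM (-σ) := by rcases hσ with rfl | rfl <;> norm_num [PM]

theorem PM.sq_eq_one {σ : ℝ} (hσ : PM σ) : σ ^ 2 = 1 := by rcases hσ with rfl | rfl <;> norm_num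

theorem PM.ne_zero {σ : ℝ} (hσ : PM σ) : σ ≠ 0 := by rcases hσ with rfl | rfl <;> norm_num

theorem PM.exists_intCast {σ : ℝ} (hσ : PM σ) : ∃ z : ℤ, σ = z := by
  rcases hσ with rfl | rfl
  exacts [⟨1, by simp⟩, ⟨-1, by simp⟩]

theorem PM.eq_or_eq_neg {σ τ : ℝ} (hσ : PM σ) (hτ : PM τ) : τ = σ ∨ τ = -σ := by
  rcases hσ with rfl | rfl <;> rcases hτ with rfl | rfl <;> norm_num

end Signs

section Lattice

variable {n : ℕ}

theorem eps_apply (i k : Fin n) : eps i k = if k = i then 1 else 0 := PiLp.single_apply ..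

theorem inner_eps_right (v : Euc n) (i : Fin n) : ⟪v, eps i⟫ = v i := by
  simp [eps, EuclideanSpace.inner_single_right]

theorem inner_eps_left (v : Euc n) (i : Fin n) : ⟪eps i, v⟫ = v i := by
  rw [real_inner_comm, inner_eps_right]

theorem inner_eps_eps (i j : Fin n) : ⟪eps i, eps j⟫ = if j = i then 1 else 0 := by
  rw [inner_eps_right, eps_apply]

def intLattice (n : ℕ) : AddSubgroup (Euc n) where
  carrier := {v | ∀ k, ∃ z : ℤ, (z : ℝ) = v k}
  add_mem' {v w} hv hw k := by
    obtain ⟨a, ha⟩ := hv k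
    obtain ⟨b, hb⟩ := hw k
    exact ⟨a + b, by simp [ha, hb]⟩
  zero_mem' k := ⟨0, by simp⟩
  neg_mem' {v} hv k := by
    obtain ⟨a, ha⟩ := hv k
    exact ⟨-a, by simp [ha]⟩

theorem intCast_smul_eps_mem_intLattice (m : ℤ) (i : Fin n) : (m : ℝ) • eps i ∈ intLattice n := by
  intro k
  refine ⟨if k = i then m else 0, ?_⟩
  symm
  rw [PiLp.smul_apply, eps_apply]; split_ifs <;> simp

theorem exists_inner_eq_intCast {v w : Euc n} (hv : v ∈ intLattice n) (hw : w ∈ intLattice n) :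
    ∃ m : ℤ, ⟪v, w⟫ = m := by
  choose a ha using hv
  choose b hb using hw
  refine ⟨∑ k, b k * a k, ?_⟩
  simp [PiLp.inner_apply, ← ha, ← hb]

theorem one_le_sq_apply {v : Euc n} (hv : v ∈ intLattice n) {i : Fin n} (hi : v i ≠ 0) :
    1 ≤ v i ^ 2 := by
  obtain ⟨z, hz⟩ := hv i
  rw [← hz] at hi ⊢
  -- coordinates have type `(fun _ ↦ ℝ) i`, which `norm_cast` does not see through
  beta_reduce
  have hz2 : 0 < z ^ 2 := by positivity [Int.cast_ne_zero.mp hi]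
  exact_mod_cast (hz2 : (1 : ℤ) ≤ z ^ 2)

theorem inner_self_sub_apply_smul_eps (v : Euc n) (i : Fin n) :
    ⟪v - v i • eps i, v - v i • eps i⟫ = ⟪v, v⟫ - v i ^ 2 := by
  simp only [inner_sub_left, inner_sub_right, real_inner_smul_left, real_inner_smul_right,
    inner_eps_left, inner_eps_right, eps_apply, if_true]
  ring

theorem apply_smul_eps_mem_intLattice {v : Euc n} (hv : v ∈ intLattice n) (i : Fin n) :
    v i • eps i ∈ intLattice n := by
  obtain ⟨z, hz⟩ := hv i
  rw [← hz]
  exact intCast_smul_eps_mem_intLattice z i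

theorem exists_PM_apply_of_inner_self_le_two {v : Euc n} (hv : v ∈ intLattice n) (h0 : v ≠ 0)
    (h2 : ⟪v, v⟫ ≤ 2) : ∃ i, PM (v i) ∧ ⟪v - v i • eps i, v - v i • eps i⟫ = ⟪v, v⟫ - 1 := by
  obtain ⟨i, hi⟩ : ∃ i, v i ≠ 0 := by
    by_contra! h
    exact h0 (by ext k; simp [h k])
  have hsq : v i ^ 2 = 1 := by
    have hle : v i ^ 2 ≤ 2 := by
      have := real_inner_self_nonneg (x := v - v i • eps i)
      rw [inner_self_sub_apply_smul_eps] at this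
      linarith
    have hge := one_le_sq_apply hv hi
    obtain ⟨z, hz⟩ := hv i
    rw [← hz] at hle hge ⊢
    beta_reduce at hle hge ⊢
    have hle' : z ^ 2 ≤ 2 := by exact_mod_cast hle
    have hge' : 1 ≤ z ^ 2 := by exact_mod_cast hge
    have : z ^ 2 = 1 := by
      have hlo : -1 ≤ z := by nlinarith
      have hhi : z ≤ 1 := by nlinarith
      interval_cases z <;> simp_all
    exact_mod_cast this
  refine ⟨i, ?_, by rw [inner_self_sub_apply_smul_eps, hsq]⟩
  rwa [PM, ← mul_self_eq_one_iff, ← sq]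

theorem exists_eq_smul_eps_of_inner_self_eq_one {v : Euc n} (hv : v ∈ intLattice n)
    (h : ⟪v, v⟫ = 1) : ∃ i σ, PM σ ∧ v = σ • eps i := by
  obtain ⟨i, hi, hw⟩ :=
    exists_PM_apply_of_inner_self_le_two hv (by rintro rfl; simp at h) (by rw [h]; norm_num)
  rw [h, sub_self, inner_self_eq_zero, sub_eq_zero] at hw
  exact ⟨i, v i, hi, hw⟩

theorem exists_eq_smul_eps_add_smul_eps_of_inner_self_eq_two {v : Euc n}
    (hv : v ∈ intLattice n) (h : ⟪v, v⟫ = 2) :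
    ∃ i j, i ≠ j ∧ ∃ σ τ, PM σ ∧ PM τ ∧ v = σ • eps i + τ • eps j := by
  obtain ⟨i, hi, hw⟩ :=
    exists_PM_apply_of_inner_self_le_two hv (by rintro rfl; simp at h) h.le
  rw [h, show (2 : ℝ) - 1 = 1 by norm_num] at hw
  obtain ⟨j, τ, hτ, hwj⟩ := exists_eq_smul_eps_of_inner_self_eq_one
    (sub_mem hv (apply_smul_eps_mem_intLattice hv i)) hw
  refine ⟨i, j, ?_, v i, τ, hi, hτ, by rw [← hwj]; abel⟩
  rintro rfl
  have := congrArg (· i) hwj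
  simp [eps_apply] at this
  exact hτ.ne_zero this.symm

end Lattice

section RootSystem
variable {n : ℕ}

theorem inner_smul_eps_smul_eps (σ τ : ℝ) (i j : Fin n) :
    ⟪σ • eps i, τ • eps j⟫ = if j = i then σ * τ else 0 := by
  rw [real_inner_smul_left, real_inner_smul_right, inner_eps_eps]
  split_ifs <;> ring

theorem inner_self_smul_eps {σ : ℝ} (hσ : PM σ) (i : Fin n) : ⟪σ • eps i, σ • eps i⟫ = 1 := by
  rw [inner_smul_eps_smul_eps, if_pos rfl, ← sq, hσ.sq_eq_one]

theorem inner_self_smul_eps_add_smul_eps {σ τ : ℝ} (hσ : PM σ) (hτ : PM τ) {i j : Fin n}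
    (hij : i ≠ j) : ⟪σ • eps i + τ • eps j, σ • eps i + τ • eps j⟫ = 2 := by
  simp only [inner_add_left, inner_add_right, inner_smul_eps_smul_eps, if_pos, hij, hij.symm,
    if_false, ← sq, hσ.sq_eq_one, hτ.sq_eq_one]
  norm_num

theorem smul_eps_mem_PhiD2 {σ : ℝ} (hσ : PM σ) (s : Fin n) (m : ℤ) :
    (σ • eps s, (m : ℝ)) ∈ PhiD2 n :=
  Or.inl ⟨s, σ, hσ, m, rfl⟩

theorem smul_eps_add_smul_eps_mem_PhiD2 {σ τ : ℝ} (hσ : PM σ) (hτ : PM τ) {s t : Fin n}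
    (hst : s ≠ t) (r : ℤ) : (σ • eps s + τ • eps t, ((2 * r : ℤ) : ℝ)) ∈ PhiD2 n :=
  Or.inr ⟨s, t, hst, σ, τ, hσ, hτ, r, rfl⟩

theorem smul_eps_mem_intLattice {σ : ℝ} (hσ : PM σ) (i : Fin n) : σ • eps i ∈ intLattice n := by
  obtain ⟨z, rfl⟩ := hσ.exists_intCast
  exact intCast_smul_eps_mem_intLattice z i

theorem mem_PhiD2_iff {x : Euc n × ℝ} :
    x ∈ PhiD2 n ↔ x.1 ∈ intLattice n ∧ (⟪x.1, x.1⟫ = 1 ∨ ⟪x.1, x.1⟫ = 2) ∧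
      x.2 ∈ AddSubgroup.zmultiples ⟪x.1, x.1⟫ := by
  constructor
  · rintro (⟨i, σ, hσ, r, rfl⟩ | ⟨i, j, hij, σ, τ, hσ, hτ, r, rfl⟩)
    · refine ⟨smul_eps_mem_intLattice hσ i, Or.inl (inner_self_smul_eps hσ i), ?_⟩
      rw [inner_self_smul_eps hσ i]
      exact ⟨r, by simp⟩
    · refine ⟨add_mem (smul_eps_mem_intLattice hσ i) (smul_eps_mem_intLattice hτ j),
        Or.inr (inner_self_smul_eps_add_smul_eps hσ hτ hij), ?_⟩
      rw [inner_self_smul_eps_add_smul_eps hσ hτ hij]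
      exact ⟨r, by simp [mul_comm]⟩
  · obtain ⟨v, c⟩ := x
    rintro ⟨hv, hnorm | hnorm, k, hk⟩ <;> rw [hnorm] at hk
    · obtain ⟨i, σ, hσ, hx⟩ := exists_eq_smul_eps_of_inner_self_eq_one hv hnorm
      exact Or.inl ⟨i, σ, hσ, k, Prod.ext hx (by simpa using hk.symm)⟩
    · obtain ⟨i, j, hij, σ, τ, hσ, hτ, hx⟩ :=
        exists_eq_smul_eps_add_smul_eps_of_inner_self_eq_two hv hnorm
      exact Or.inr ⟨i, j, hij, σ, τ, hσ, hτ, k, Prod.ext hx (by simpa [mul_comm] using hk.symm)⟩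

theorem fst_ne_zero_of_mem_PhiD2 {x : Euc n × ℝ} (hx : x ∈ PhiD2 n) : x.1 ≠ 0 := by
  intro h
  rcases (mem_PhiD2_iff.1 hx).2.1 with h' | h' <;> rw [h, inner_zero_left] at h' <;> norm_num at h'

theorem exists_cartanPair_eq_intCast {x y : Euc n × ℝ} (hx : x ∈ PhiD2 n) (hy : y ∈ PhiD2 n) :
    ∃ k : ℤ, cartanPair x.1 y.1 = k := by
  rw [mem_PhiD2_iff] at hx hy
  obtain ⟨m, hm⟩ := exists_inner_eq_intCast hy.1 hx.1
  rcases hx.2.1 with h | h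
  · exact ⟨2 * m, by rw [cartanPair, hm, h]; push_cast; ring⟩
  · exact ⟨m, by rw [cartanPair, hm, h]; ring⟩

theorem reflA_mem_PhiD2 {x y : Euc n × ℝ} (hx : x ∈ PhiD2 n) (hy : y ∈ PhiD2 n) :
    reflA x y ∈ PhiD2 n := by
  obtain ⟨k, hk⟩ := exists_cartanPair_eq_intCast hx hy
  have hx0 : ⟪x.1, x.1⟫ ≠ 0 := inner_self_ne_zero.2 (fst_ne_zero_of_mem_PhiD2 hx)
  have hkx : k * ⟪x.1, x.1⟫ = 2 * ⟪y.1, x.1⟫ := by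
    rw [← hk, cartanPair, div_mul_cancel₀ _ hx0]
  rw [mem_PhiD2_iff] at hx hy ⊢
  obtain ⟨m, hm⟩ := exists_inner_eq_intCast hy.1 hx.1
  have hnorm : ⟪y.1 - (k : ℝ) • x.1, y.1 - (k : ℝ) • x.1⟫ = ⟪y.1, y.1⟫ := by
    simp only [inner_sub_left, inner_sub_right, real_inner_smul_left, real_inner_smul_right,
      real_inner_comm y.1 x.1]
    linear_combination (k : ℝ) * hkx
  rw [reflA_eq_sub_smul, hk, Prod.fst_sub, Prod.smul_fst, Prod.snd_sub, Prod.smul_snd, hnorm]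
  refine ⟨sub_mem hy.1 ?_, hy.2.1, sub_mem hy.2.2 ?_⟩
  · rw [Int.cast_smul_eq_zsmul]
    exact zsmul_mem hx.1 k
  · -- `k c = 2 j ⟪y, x⟫` with `⟪y, x⟫ ∈ ℤ`, and `2ℤ ⊆ ‖y‖² ℤ`
    obtain ⟨j, hj⟩ := hx.2.2
    have hkc : (k : ℝ) • x.2 = (j * m) • (2 : ℝ) := by
      rw [← hj]
      simp only [zsmul_eq_mul, smul_eq_mul]
      push_cast
      linear_combination (j : ℝ) * hkx + 2 * (j : ℝ) * hm
    rw [hkc]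
    refine zsmul_mem ?_ _
    rcases hy.2.1 with h | h <;> rw [h]
    exacts [⟨2, by norm_num⟩, AddSubgroup.mem_zmultiples 2]

end RootSystem

section SubsystemPsiI
variable {n : ℕ}

theorem intCast_mem_zmultiples_two {m : ℤ} :
    (m : ℝ) ∈ AddSubgroup.zmultiples (2 : ℝ) ↔ Even m := by
  simp only [AddSubgroup.mem_zmultiples_iff, zsmul_eq_mul, even_iff_exists_two_mul]
  constructor
  · rintro ⟨k, hk⟩
    exact ⟨k, by exact_mod_cast (by linarith : (m : ℝ) = 2 * k)⟩
  · rintro ⟨k, rfl⟩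
    exact ⟨k, by push_cast; ring⟩

def parityForm (I : Set (Fin n)) : Euc n × ℝ →+ ℝ where
  toFun x := x.2 - ∑ k, Iᶜ.indicator 1 k * x.1 k
  map_zero' := by simp
  map_add' x y := by
    simp only [Prod.snd_add, Prod.fst_add, PiLp.add_apply, mul_add, Finset.sum_add_distrib]
    ring

theorem parityForm_smul_eps (I : Set (Fin n)) (σ : ℝ) (s : Fin n) (c : ℝ) :
    parityForm I (σ • eps s, c) = c - σ * Iᶜ.indicator 1 s := by
  simp [parityForm, eps_apply, mul_comm]

theorem PM.exists_mul_indicator_eq_intCast {σ : ℝ} (hσ : PM σ) (I : Set (Fin n)) (s : Fin n) :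
    ∃ z : ℤ, σ * Iᶜ.indicator 1 s = z ∧ (Even z ↔ s ∈ I) := by
  by_cases hs : s ∈ I
  · exact ⟨0, by simp [hs]⟩
  · obtain ⟨z, rfl⟩ := hσ.exists_intCast
    refine ⟨z, by simp [hs], ?_⟩
    have hz : z = 1 ∨ z = -1 := by rcases hσ with h | h <;> [left; right] <;> exact_mod_cast h
    rcases hz with rfl | rfl <;> simp [hs]

theorem parityForm_smul_eps_mem_iff (I : Set (Fin n)) {σ : ℝ} (hσ : PM σ) (s : Fin n) (m : ℤ) :
    parityForm I (σ • eps s, (m : ℝ)) ∈ AddSubgroup.zmultiples 2 ↔ (Even m ↔ s ∈ I) := by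
  obtain ⟨z, hz, hzI⟩ := hσ.exists_mul_indicator_eq_intCast I s
  rw [parityForm_smul_eps, hz, ← Int.cast_sub, intCast_mem_zmultiples_two, Int.even_sub, hzI]

theorem parityForm_smul_eps_add_smul_eps_mem_iff (I : Set (Fin n)) {σ τ : ℝ} (hσ : PM σ)
    (hτ : PM τ) (s t : Fin n) (r : ℤ) :
    parityForm I (σ • eps s + τ • eps t, ((2 * r : ℤ) : ℝ)) ∈ AddSubgroup.zmultiples 2 ↔
      (s ∈ I ↔ t ∈ I) := by
  obtain ⟨z, hz, hzI⟩ := hσ.exists_mul_indicator_eq_intCast I s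
  obtain ⟨w, hw, hwI⟩ := hτ.exists_mul_indicator_eq_intCast I t
  have hsplit : (σ • eps s + τ • eps t, ((2 * r : ℤ) : ℝ)) =
      (σ • eps s, ((2 * r : ℤ) : ℝ)) + (τ • eps t, ((0 : ℤ) : ℝ)) := by simp
  rw [hsplit, map_add, parityForm_smul_eps, parityForm_smul_eps, hz, hw, ← Int.cast_sub,
    ← Int.cast_sub, ← Int.cast_add, intCast_mem_zmultiples_two, Int.even_add, Int.even_sub,
    Int.even_sub, hzI, hwI]
  simp

theorem PsiID2_eq (I : Set (Fin n)) :
    PsiID2 n I = {x | x ∈ PhiD2 n ∧ parityForm I x ∈ AddSubgroup.zmultiples 2} := by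
  ext x
  constructor
  · rintro (⟨s, hs, σ, hσ, r, rfl⟩ | ⟨s, hs, σ, hσ, r, rfl⟩ |
      ⟨s, t, hst, hI, σ, τ, hσ, hτ, r, rfl⟩)
    · exact ⟨smul_eps_mem_PhiD2 hσ s _, by rw [parityForm_smul_eps_mem_iff I hσ]; simp [hs]⟩
    · exact ⟨smul_eps_mem_PhiD2 hσ s _, by rw [parityForm_smul_eps_mem_iff I hσ]; simp [hs]⟩
    · exact ⟨smul_eps_add_smul_eps_mem_PhiD2 hσ hτ hst r, by
        rw [parityForm_smul_eps_add_smul_eps_mem_iff I hσ hτ]; tauto⟩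
  · rintro ⟨⟨s, σ, hσ, m, rfl⟩ | ⟨s, t, hst, σ, τ, hσ, hτ, r, rfl⟩, hf⟩
    · rw [parityForm_smul_eps_mem_iff I hσ] at hf
      by_cases hs : s ∈ I
      · obtain ⟨r, rfl⟩ := hf.2 hs
        exact Or.inl ⟨s, hs, σ, hσ, r, by rw [two_mul]⟩
      · obtain ⟨r, rfl⟩ := Int.not_even_iff_odd.1 (mt hf.1 hs)
        exact Or.inr (Or.inl ⟨s, hs, σ, hσ, r, rfl⟩)
    · rw [parityForm_smul_eps_add_smul_eps_mem_iff I hσ hτ] at hf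
      exact Or.inr (Or.inr ⟨s, t, hst, by tauto, σ, τ, hσ, hτ, r, rfl⟩)

theorem isClosedSubrootSystem_PsiID2 (hn : 0 < n) (I : Set (Fin n)) :
    IsClosedSubrootSystem (PhiD2 n) (PsiID2 n I) := by
  let s : Fin n := ⟨0, hn⟩
  have hΦ (m : ℤ) : (eps s, (m : ℝ)) ∈ PhiD2 n := by simpa using smul_eps_mem_PhiD2 PM.one s m
  have hmem (m : ℤ) : (eps s, (m : ℝ)) ∈ PsiID2 n I ↔ (Even m ↔ s ∈ I) := by
    have := parityForm_smul_eps_mem_iff I PM.one s m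
    rw [one_smul] at this
    simp [PsiID2_eq, this, hΦ]
  rw [IsClosedSubrootSystem, IsSubrootSystem]
  refine ⟨⟨?_, fun x hx => ((PsiID2_eq I).subset hx).1, ?_, ?_⟩, ?_⟩
  · by_cases hs : s ∈ I
    exacts [⟨_, (hmem 0).2 (by simp [hs])⟩, ⟨_, (hmem 1).2 (by simp [hs])⟩]
  · intro h
    by_cases hs : s ∈ I
    · simpa [hs] using (hmem 1).1 (h ▸ hΦ 1)
    · simpa [hs] using (hmem 0).1 (h ▸ hΦ 0)
  · rw [PsiID2_eq]
    exact fun x hx y hy => reflA_mem_setOf_map_mem (fun _ hx _ hy => reflA_mem_PhiD2 hx hy)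
      (fun _ hx _ hy => exists_cartanPair_eq_intCast hx hy) _ _ hx hy
  · rw [PsiID2_eq]
    exact isClosedIn_setOf_map_mem _ _ _

end SubsystemPsiI

section MaximalSubsystem
variable {n : ℕ} {Ψ : Set (Euc n × ℝ)}

theorem exists_intCast_snd_of_mem_PhiD2 {x : Euc n × ℝ} (hx : x ∈ PhiD2 n) :
    ∃ k : ℤ, x.2 = k := by
  rcases hx with ⟨_, _, _, r, rfl⟩ | ⟨_, _, _, _, _, _, _, r, rfl⟩
  exacts [⟨r, rfl⟩, ⟨2 * r, rfl⟩]

theorem smul_mem_of_PM (hΨ : IsSubrootSystem (PhiD2 n) Ψ) {σ : ℝ} (hσ : PM σ) {x : Euc n × ℝ}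
    (hx : x ∈ Ψ) : σ • x ∈ Ψ := by
  rcases hσ with rfl | rfl
  · rwa [one_smul]
  · rw [neg_one_smul, ← reflA_self (fst_ne_zero_of_mem_PhiD2 (hΨ.2.1 hx))]
    exact hΨ.2.2.2 x hx x hx

theorem exists_smul_eps_mem_of_smul_eps_mem (hΨ : IsSubrootSystem (PhiD2 n) Ψ) {ρ ρ' : ℝ}
    (hρ : PM ρ) (hρ' : PM ρ') {s : Fin n} {m : ℤ} (h : (ρ • eps s, (m : ℝ)) ∈ Ψ) :
    ∃ m' : ℤ, (ρ' • eps s, (m' : ℝ)) ∈ Ψ ∧ (Even m' ↔ Even m) := by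
  rcases hρ.eq_or_eq_neg hρ' with rfl | rfl
  · exact ⟨m, h, Iff.rfl⟩
  · refine ⟨-m, ?_, even_neg⟩
    simpa [neg_smul] using smul_mem_of_PM hΨ PM.one.neg h

theorem reflV_mem_GrC (hΨ : IsSubrootSystem (PhiD2 n) Ψ) {u w : Euc n} (hu : u ∈ GrC Ψ)
    (hw : w ∈ GrC Ψ) : reflV u w ∈ GrC Ψ := by
  obtain ⟨a, ha⟩ := hu
  obtain ⟨c, hc⟩ := hw
  exact ⟨_, hΨ.2.2.2 _ ha _ hc⟩

theorem reflV_smul_eps {σ : ℝ} (hσ : PM σ) (i : Fin n) (w : Euc n) :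
    reflV (σ • eps i) w = w - (2 * w i) • eps i := by
  rw [reflV, cartanPair, inner_self_smul_eps hσ, real_inner_smul_right, inner_eps_right, div_one,
    smul_smul, show 2 * (σ * w i) * σ = 2 * w i * σ ^ 2 by ring, hσ.sq_eq_one, mul_one]

theorem smul_eps_add_mem_GrC (hΨ : IsSubrootSystem (PhiD2 n) Ψ) {σ ρ ρ' : ℝ} (hσ : PM σ)
    (hρ : PM ρ) (hρ' : PM ρ') {i : Fin n} (hi : σ • eps i ∈ GrC Ψ) {w : Euc n} (hw : w i = 0)
    (h : ρ • eps i + w ∈ GrC Ψ) : ρ' • eps i + w ∈ GrC Ψ := by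
  rcases hρ.eq_or_eq_neg hρ' with rfl | rfl
  · exact h
  · have := reflV_mem_GrC hΨ hi h
    rw [reflV_smul_eps hσ] at this
    convert this using 1
    simp [eps_apply, hw]
    module

theorem smul_eps_add_smul_eps_mem_GrC (hΨ : IsSubrootSystem (PhiD2 n) Ψ) {σ τ : ℝ} (hσ : PM σ)
    (hτ : PM τ) {i j : Fin n} (hij : i ≠ j) (hi : σ • eps i ∈ GrC Ψ) (hj : τ • eps j ∈ GrC Ψ)
    (h : eps i + eps j ∈ GrC Ψ) : σ • eps i + τ • eps j ∈ GrC Ψ := by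
  have hj0 : ((1 : ℝ) • eps j) i = 0 := by simp [eps_apply, hij]
  have hi0 : (σ • eps i) j = 0 := by simp [eps_apply, hij.symm]
  have h1 := smul_eps_add_mem_GrC hΨ hσ PM.one hσ hi hj0 (by rwa [one_smul, one_smul])
  rw [add_comm] at h1 ⊢
  exact smul_eps_add_mem_GrC hΨ hτ PM.one hτ hj hi0 h1

/-- Read with `a = ⟪u, u⟫`, `b = ⟪v, v⟫`, `m = ⟪u, v⟫` for roots `u`, `v`, `u + v`: either `u`, `v`
are orthogonal short roots, or `s_u v = u + v`, or `s_v u = u + v`. -/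
theorem root_sum_cases {a b : ℝ} {m : ℤ} (ha : a = 1 ∨ a = 2) (hb : b = 1 ∨ b = 2)
    (hab : a + 2 * m + b = 1 ∨ a + 2 * m + b = 2) :
    (a = 1 ∧ b = 1 ∧ m = 0) ∨ 2 * (m : ℝ) = -a ∨ 2 * (m : ℝ) = -b := by
  obtain ⟨a', rfl⟩ : ∃ a' : ℤ, a = a' := by
    rcases ha with rfl | rfl
    exacts [⟨1, by simp⟩, ⟨2, by simp⟩]
  obtain ⟨b', rfl⟩ : ∃ b' : ℤ, b = b' := by
    rcases hb with rfl | rfl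
    exacts [⟨1, by simp⟩, ⟨2, by simp⟩]
  norm_cast at ha hb hab ⊢
  omega

structure IsGapPair (Ψ : Set (Euc n × ℝ)) (i j : Fin n) : Prop where
  ne : i ≠ j
  left : ∃ a : ℤ, (eps i, (a : ℝ)) ∈ Ψ
  right : ∃ b : ℤ, (eps j, (b : ℝ)) ∈ Ψ
  add_notMem : eps i + eps j ∉ GrC Ψ

theorem exists_isGapPair (hΨ : IsSubrootSystem (PhiD2 n) Ψ)
    (hGr : ∃ u ∈ GrC Ψ, ∃ v ∈ GrC Ψ, u + v ∈ GrC (PhiD2 n) \ GrC Ψ) :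
    ∃ i j, IsGapPair Ψ i j := by
  obtain ⟨u, ⟨c, hu⟩, v, ⟨d, hv⟩, ⟨_, hsum⟩, hnot⟩ := hGr
  have huΦ := mem_PhiD2_iff.1 (hΨ.2.1 hu)
  have hvΦ := mem_PhiD2_iff.1 (hΨ.2.1 hv)
  obtain ⟨m, hm⟩ := exists_inner_eq_intCast huΦ.1 hvΦ.1
  have hnorm : ⟪u, u⟫ + 2 * m + ⟪v, v⟫ = 1 ∨ ⟪u, u⟫ + 2 * m + ⟪v, v⟫ = 2 := by
    rw [← hm, ← real_inner_add_add_self]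
    exact (mem_PhiD2_iff.1 hsum).2.1
  rcases root_sum_cases huΦ.2.1 hvΦ.2.1 hnorm with ⟨huu, hvv, rfl⟩ | h | h
  · obtain ⟨i, σ, hσ, rfl⟩ := exists_eq_smul_eps_of_inner_self_eq_one huΦ.1 huu
    obtain ⟨j, τ, hτ, rfl⟩ := exists_eq_smul_eps_of_inner_self_eq_one hvΦ.1 hvv
    have hij : i ≠ j := by
      rintro rfl
      rw [inner_smul_eps_smul_eps, if_pos rfl, Int.cast_zero] at hm
      exact mul_ne_zero hσ.ne_zero hτ.ne_zero hm
    obtain ⟨k, rfl⟩ := exists_intCast_snd_of_mem_PhiD2 (hΨ.2.1 hu)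
    obtain ⟨l, rfl⟩ := exists_intCast_snd_of_mem_PhiD2 (hΨ.2.1 hv)
    obtain ⟨a, ha, -⟩ := exists_smul_eps_mem_of_smul_eps_mem hΨ hσ PM.one hu
    obtain ⟨b, hb, -⟩ := exists_smul_eps_mem_of_smul_eps_mem hΨ hτ PM.one hv
    rw [one_smul] at ha hb
    exact ⟨i, j, hij, ⟨a, ha⟩, ⟨b, hb⟩,
      fun h => hnot (smul_eps_add_smul_eps_mem_GrC hΨ hσ hτ hij ⟨_, hu⟩ ⟨_, hv⟩ h)⟩
  · have := hΨ.2.2.2 _ hu _ hv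
    rw [reflA_eq_add (fst_ne_zero_of_mem_PhiD2 (hΨ.2.1 hu)) (by rwa [real_inner_comm, hm])] at this
    exact (hnot ⟨d + c, by rw [add_comm u v]; exact this⟩).elim
  · have := hΨ.2.2.2 _ hv _ hu
    rw [reflA_eq_add (fst_ne_zero_of_mem_PhiD2 (hΨ.2.1 hv)) (by rwa [hm])] at this
    exact (hnot ⟨_, this⟩).elim

theorem smul_eps_add_smul_eps_mem (hΨ : IsClosedIn (PhiD2 n) Ψ) {σ τ : ℝ} (hσ : PM σ)
    (hτ : PM τ) {s t : Fin n} (hst : s ≠ t) {a b : ℤ} (ha : (σ • eps s, (a : ℝ)) ∈ Ψ)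
    (hb : (τ • eps t, (b : ℝ)) ∈ Ψ) (hab : Even (a + b)) :
    (σ • eps s + τ • eps t, ((a + b : ℤ) : ℝ)) ∈ Ψ := by
  obtain ⟨r, hr⟩ := hab
  have hΦ := smul_eps_add_smul_eps_mem_PhiD2 hσ hτ hst r
  rw [two_mul, ← hr] at hΦ
  rw [Int.cast_add]
  exact hΨ _ ha _ hb (by rwa [Int.cast_add] at hΦ)

def evenLevelIndices (Ψ : Set (Euc n × ℝ)) : Set (Fin n) :=
  {s | ∃ m : ℤ, Even m ∧ (eps s, (m : ℝ)) ∈ Ψ}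

theorem mem_evenLevelIndices_of_smul_eps_mem (hΨ : IsSubrootSystem (PhiD2 n) Ψ) {σ : ℝ}
    (hσ : PM σ) {s : Fin n} {m : ℤ} (hx : (σ • eps s, (m : ℝ)) ∈ Ψ) (hm : Even m) :
    s ∈ evenLevelIndices Ψ := by
  obtain ⟨m', hm', hpar⟩ := exists_smul_eps_mem_of_smul_eps_mem hΨ hσ PM.one hx
  rw [one_smul] at hm'
  exact ⟨m', hpar.2 hm, hm'⟩

theorem mem_evenLevelIndices_of_smul_eps_add_smul_eps_mem (hΨ : IsClosedSubrootSystem (PhiD2 n) Ψ)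
    {σ τ : ℝ} (hσ : PM σ) (hτ : PM τ) {s t : Fin n} {r : ℤ}
    (hx : (σ • eps s + τ • eps t, ((2 * r : ℤ) : ℝ)) ∈ Ψ) (ht : t ∈ evenLevelIndices Ψ) :
    s ∈ evenLevelIndices Ψ := by
  obtain ⟨m, hm, hmt⟩ := ht
  rw [← one_smul ℝ (eps t)] at hmt
  obtain ⟨m', hm', hpar⟩ := exists_smul_eps_mem_of_smul_eps_mem hΨ.1 PM.one hτ.neg hmt
  have hsum := hΨ.2 _ hx _ hm' (by
    convert smul_eps_mem_PhiD2 hσ s (2 * r + m') using 1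
    rw [Prod.mk_add_mk, neg_smul, add_neg_cancel_right, Int.cast_add])
  rw [Prod.mk_add_mk, neg_smul, add_neg_cancel_right, ← Int.cast_add] at hsum
  exact mem_evenLevelIndices_of_smul_eps_mem hΨ.1 hσ hsum (even_two_mul r |>.add (hpar.2 hm))

namespace IsGapPair

variable {i j : Fin n}

theorem odd_add (hΨ : IsClosedIn (PhiD2 n) Ψ) (h : IsGapPair Ψ i j) {a b : ℤ}
    (ha : (eps i, (a : ℝ)) ∈ Ψ) (hb : (eps j, (b : ℝ)) ∈ Ψ) : Odd (a + b) := by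
  rw [← Int.not_even_iff_odd]
  intro hab
  rw [← one_smul ℝ (eps i)] at ha
  rw [← one_smul ℝ (eps j)] at hb
  have := smul_eps_add_smul_eps_mem hΨ PM.one PM.one h.ne ha hb hab
  rw [one_smul, one_smul] at this
  exact h.add_notMem ⟨_, this⟩

theorem even_sub_of_ne (hΨ : IsClosedSubrootSystem (PhiD2 n) Ψ) (h : IsGapPair Ψ i j)
    {s : Fin n} (hsi : s ≠ i) (hsj : s ≠ j) {a b : ℤ} (ha : (eps s, (a : ℝ)) ∈ Ψ)
    (hb : (eps s, (b : ℝ)) ∈ Ψ) : Even (a - b) := by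
  obtain ⟨a₀, ha₀⟩ := h.left
  obtain ⟨b₀, hb₀⟩ := h.right
  have hab₀ := Int.odd_iff.1 (h.odd_add hΨ.2 ha₀ hb₀)
  -- `ε_s + ε_i` and `-ε_s + ε_j` at suitable levels would add up to `ε_i + ε_j`
  have key : ∀ e e' : ℤ, (eps s, (e : ℝ)) ∈ Ψ → (eps s, (e' : ℝ)) ∈ Ψ →
      (e + a₀) % 2 = 0 → (b₀ - e') % 2 = 0 → False := by
    intro e e' he he' h1 h2
    rw [← one_smul ℝ (eps s)] at he he'
    rw [← one_smul ℝ (eps i)] at ha₀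
    rw [← one_smul ℝ (eps j)] at hb₀
    have hx := smul_eps_add_smul_eps_mem hΨ.2 PM.one PM.one hsi he ha₀ (Int.even_iff.2 h1)
    have hy' : ((-1 : ℝ) • eps s, ((-e' : ℤ) : ℝ)) ∈ Ψ := by
      simpa [smul_smul] using smul_mem_of_PM hΨ.1 PM.one.neg he'
    have hy := smul_eps_add_smul_eps_mem hΨ.2 PM.one.neg PM.one hsj hy' hb₀
      (Int.even_iff.2 (by omega))
    obtain ⟨r, hr⟩ : Even (e + a₀ + (-e' + b₀)) := Int.even_iff.2 (by omega)
    have hΦ := smul_eps_add_smul_eps_mem_PhiD2 PM.one PM.one h.ne r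
    have hsum := hΨ.2 _ hx _ hy (by
      convert hΦ using 1
      rw [Prod.mk_add_mk, ← Int.cast_add, hr, two_mul]
      congr 1
      module)
    rw [Prod.mk_add_mk, show (1 : ℝ) • eps s + (1 : ℝ) • eps i +
      ((-1 : ℝ) • eps s + (1 : ℝ) • eps j) = eps i + eps j by module] at hsum
    exact h.add_notMem ⟨_, hsum⟩
  rw [Int.even_iff]
  by_contra hab
  by_cases hea : (a + a₀) % 2 = 0
  · exact key a b ha hb hea (by omega)
  · exact key b a hb ha (by omega) (by omega)

theorem even_sub (hΨ : IsClosedSubrootSystem (PhiD2 n) Ψ) (h : IsGapPair Ψ i j) {s : Fin n}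
    {a b : ℤ} (ha : (eps s, (a : ℝ)) ∈ Ψ) (hb : (eps s, (b : ℝ)) ∈ Ψ) : Even (a - b) := by
  by_cases hsi : s = i
  · subst hsi
    obtain ⟨b₀, hb₀⟩ := h.right
    have h1 := Int.odd_iff.1 (h.odd_add hΨ.2 ha hb₀)
    have h2 := Int.odd_iff.1 (h.odd_add hΨ.2 hb hb₀)
    exact Int.even_iff.2 (by omega)
  by_cases hsj : s = j
  · subst hsj
    obtain ⟨a₀, ha₀⟩ := h.left
    have h1 := Int.odd_iff.1 (h.odd_add hΨ.2 ha₀ ha)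
    have h2 := Int.odd_iff.1 (h.odd_add hΨ.2 ha₀ hb)
    exact Int.even_iff.2 (by omega)
  exact h.even_sub_of_ne hΨ hsi hsj ha hb

theorem evenLevelIndices_ne_univ (hΨ : IsClosedIn (PhiD2 n) Ψ) (h : IsGapPair Ψ i j) :
    evenLevelIndices Ψ ≠ Set.univ := by
  intro hI
  obtain ⟨a, ha, hai⟩ : i ∈ evenLevelIndices Ψ := hI ▸ Set.mem_univ i
  obtain ⟨b, hb, hbj⟩ : j ∈ evenLevelIndices Ψ := hI ▸ Set.mem_univ j
  exact Int.not_even_iff_odd.2 (h.odd_add hΨ hai hbj) (ha.add hb)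

theorem even_iff_mem_evenLevelIndices (hΨ : IsClosedSubrootSystem (PhiD2 n) Ψ)
    (h : IsGapPair Ψ i j) {σ : ℝ} (hσ : PM σ) {s : Fin n} {m : ℤ}
    (hx : (σ • eps s, (m : ℝ)) ∈ Ψ) : Even m ↔ s ∈ evenLevelIndices Ψ := by
  refine ⟨mem_evenLevelIndices_of_smul_eps_mem hΨ.1 hσ hx, fun ⟨m₀, hm₀, hs⟩ => ?_⟩
  obtain ⟨m', hm', hpar⟩ := exists_smul_eps_mem_of_smul_eps_mem hΨ.1 hσ PM.one hx
  rw [one_smul] at hm'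
  have := h.even_sub hΨ hm' hs
  exact hpar.1 (by simpa [hm₀, Int.even_sub] using this)

theorem subset_PsiID2 (hΨ : IsClosedSubrootSystem (PhiD2 n) Ψ) (h : IsGapPair Ψ i j) :
    Ψ ⊆ PsiID2 n (evenLevelIndices Ψ) := by
  intro x hx
  rw [PsiID2_eq]
  refine ⟨hΨ.1.2.1 hx, ?_⟩
  rcases hΨ.1.2.1 hx with ⟨s, σ, hσ, m, rfl⟩ | ⟨s, t, hst, σ, τ, hσ, hτ, r, rfl⟩
  · rw [parityForm_smul_eps_mem_iff _ hσ]
    exact h.even_iff_mem_evenLevelIndices hΨ hσ hx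
  · rw [parityForm_smul_eps_add_smul_eps_mem_iff _ hσ hτ]
    refine ⟨fun hs => ?_, mem_evenLevelIndices_of_smul_eps_add_smul_eps_mem hΨ hσ hτ hx⟩
    rw [add_comm] at hx
    exact mem_evenLevelIndices_of_smul_eps_add_smul_eps_mem hΨ hτ hσ hx hs

end IsGapPair

end MaximalSubsystem

theorem statement13_general (n : ℕ) (Ψ : Set (Euc n × ℝ))
    (hΨ : IsMaximalClosedSubrootSystem (PhiD2 n) Ψ)
    (hGr : ∃ u ∈ GrC Ψ, ∃ v ∈ GrC Ψ, u + v ∈ GrC (PhiD2 n) \ GrC Ψ) :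
    ∃ I : Set (Fin n), I ≠ Set.univ ∧ Ψ = PsiID2 n I := by
  obtain ⟨i, j, hij⟩ := exists_isGapPair hΨ.1.1 hGr
  refine ⟨evenLevelIndices Ψ, hij.evenLevelIndices_ne_univ hΨ.1.2, ?_⟩
  exact (hΨ.2 _ (isClosedSubrootSystem_PsiID2 i.pos _) (hij.subset_PsiID2 hΨ.1)).symm

/-- A maximal closed subroot system of the affine root system of
type `D_{n+1}^{(2)}` whose gradient is not closed in the gradient root system equals
some `Ψ_I` with `I ⊊ {1,…,n}`. -/
theorem statement13 (n : ℕ) (hn : 2 ≤ n) (Ψ : Set (Euc n × ℝ))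
    (hΨ : IsMaximalClosedSubrootSystem (PhiD2 n) Ψ)
    (hGr : ∃ u ∈ GrC Ψ, ∃ v ∈ GrC Ψ, u + v ∈ GrC (PhiD2 n) \ GrC Ψ) :
    ∃ I : Set (Fin n), I ≠ Set.univ ∧ Ψ = PsiID2 n I :=
  statement13_general n Ψ hΨ hGr
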